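/- Let m₁, m₂, m₃ > 0 be real numbers. Then the Euler quintic polynomial p(x) = (m₃+m₂)x⁵ + (3m₃+2m₂)x⁴ + (3m₃+m₂)x³ − (3m₁+m₂)x² − (3m₁+2m₂)x − (m₁+m₂) has exactly one positive real root, i.e., there is a unique x > 0 with p(x) = 0. -/

import Mathlib

/-!
The coefficients of the Euler quintic have the sign pattern `+ + + − − −`, so by Descartes'
rule of signs it has at most one positive root. It has one by the intermediate value theorem,
since its value at `0` is `−(m₁ + m₂) < 0` and its leading coefficient is positive.
-/

open Polynomial Filter

namespace Polynomial

theorem subsingleton_pos_roots_of_signVariations_le_one {P : ℝ[X]} (hP : P ≠ 0)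
    (h : P.signVariations ≤ 1) : {x : ℝ | 0 < x ∧ P.IsRoot x}.Subsingleton := by
  have hcard : (P.roots.toFinset.filter (0 < ·)).card ≤ 1 := calc
    _ = (P.roots.filter (0 < ·)).toFinset.card := by rw [Multiset.toFinset_filter]
    _ ≤ P.roots.countP (0 < ·) := by
      rw [Multiset.countP_eq_card_filter]; exact Multiset.toFinset_card_le _
    _ ≤ 1 := (roots_countP_pos_le_signVariations P).trans h
  have mem : ∀ z, 0 < z → P.IsRoot z → z ∈ P.roots.toFinset.filter (0 < ·) :=
    fun z hz hPz ↦ Finset.mem_filter.mpr ⟨Multiset.mem_toFinset.mpr ((mem_roots hP).mpr hPz), hz⟩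
  rintro x ⟨hx, hPx⟩ y ⟨hy, hPy⟩
  exact Finset.card_le_one.mp hcard x (mem x hx hPx) y (mem y hy hPy)

theorem exists_pos_isRoot_of_eval_zero_neg_of_leadingCoeff_pos {P : ℝ[X]} (h0 : P.eval 0 < 0)
    (hlead : 0 < P.leadingCoeff) : ∃ x, 0 < x ∧ P.IsRoot x := by
  have hdeg : 0 < P.degree := by
    by_contra! hle
    rw [eq_C_of_degree_le_zero hle] at h0 hlead
    simp only [eval_C, leadingCoeff_C] at h0 hlead
    linarith
  obtain ⟨c, hc⟩ := eventually_atTop.mp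
    ((P.tendsto_atTop_of_leadingCoeff_nonneg hdeg hlead.le).eventually_gt_atTop 0)
  have hb : 0 < max c 1 := lt_max_of_lt_right one_pos
  obtain ⟨x, hx, hPx⟩ := intermediate_value_Ioo hb.le P.continuous.continuousOn
    ⟨h0, hc _ (le_max_left c 1)⟩
  exact ⟨x, hx.1, hPx⟩

end Polynomial

noncomputable def eulerQuintic (m1 m2 m3 : ℝ) : ℝ[X] :=
  C (m3 + m2) * X ^ 5 + C (3 * m3 + 2 * m2) * X ^ 4 + C (3 * m3 + m2) * X ^ 3
    - C (3 * m1 + m2) * X ^ 2 - C (3 * m1 + 2 * m2) * X - C (m1 + m2)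

section eulerQuintic

variable {m1 m2 m3 : ℝ}

theorem eval_eulerQuintic (x : ℝ) : (eulerQuintic m1 m2 m3).eval x =
    (m3 + m2) * x ^ 5 + (3 * m3 + 2 * m2) * x ^ 4 + (3 * m3 + m2) * x ^ 3
      - (3 * m1 + m2) * x ^ 2 - (3 * m1 + 2 * m2) * x - (m1 + m2) := by
  simp [eulerQuintic]

theorem degree_eulerQuintic (h : m3 + m2 ≠ 0) : (eulerQuintic m1 m2 m3).degree = 5 := by
  unfold eulerQuintic
  compute_degree!

theorem leadingCoeff_eulerQuintic (h : m3 + m2 ≠ 0) :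
    (eulerQuintic m1 m2 m3).leadingCoeff = m3 + m2 := by
  rw [leadingCoeff, natDegree_eq_of_degree_eq_some (degree_eulerQuintic h)]
  simp [eulerQuintic, -map_add, -map_mul]

theorem coeffList_eulerQuintic (h : m3 + m2 ≠ 0) : (eulerQuintic m1 m2 m3).coeffList =
    [m3 + m2, 3 * m3 + 2 * m2, 3 * m3 + m2, -(3 * m1 + m2), -(3 * m1 + 2 * m2), -(m1 + m2)] := by
  rw [coeffList, degree_eulerQuintic h]
  simp [List.range_succ, eulerQuintic, coeff_X, coeff_C, -map_add, -map_mul]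

theorem signVariations_eulerQuintic (hm1 : 0 < m1) (hm2 : 0 < m2) (hm3 : 0 < m3) :
    (eulerQuintic m1 m2 m3).signVariations = 1 := by
  have sign_neg_of_pos : ∀ a : ℝ, 0 < a → SignType.sign (-a) = -1 :=
    fun a ha ↦ sign_neg (neg_neg_of_pos ha)
  rw [signVariations, coeffList_eulerQuintic (by positivity)]
  simp only [List.map_cons, List.map_nil, sign_pos (show 0 < m3 + m2 by positivity),
    sign_pos (show 0 < 3 * m3 + 2 * m2 by positivity),
    sign_pos (show 0 < 3 * m3 + m2 by positivity),
    sign_neg_of_pos _ (show 0 < 3 * m1 + m2 by positivity),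
    sign_neg_of_pos _ (show 0 < 3 * m1 + 2 * m2 by positivity),
    sign_neg_of_pos _ (show 0 < m1 + m2 by positivity)]
  rfl

end eulerQuintic

theorem euler_quintic_unique_positive_root (m1 m2 m3 : ℝ)
    (hm1 : 0 < m1) (hm2 : 0 < m2) (hm3 : 0 < m3) :
    ∃! x : ℝ, 0 < x ∧
      (m3 + m2) * x ^ 5 + (3 * m3 + 2 * m2) * x ^ 4 + (3 * m3 + m2) * x ^ 3
        - (3 * m1 + m2) * x ^ 2 - (3 * m1 + 2 * m2) * x - (m1 + m2) = 0 := by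
  have hlead : 0 < (eulerQuintic m1 m2 m3).leadingCoeff := by
    rw [leadingCoeff_eulerQuintic (by positivity)]; positivity
  have hP : eulerQuintic m1 m2 m3 ≠ 0 := leadingCoeff_ne_zero.mp hlead.ne'
  have h0 : (eulerQuintic m1 m2 m3).eval 0 < 0 := by rw [eval_eulerQuintic]; linarith
  simp only [← eval_eulerQuintic]
  obtain ⟨x, hx, hroot⟩ := exists_pos_isRoot_of_eval_zero_neg_of_leadingCoeff_pos h0 hlead
  exact ⟨x, ⟨hx, hroot⟩, fun y hy ↦ subsingleton_pos_roots_of_signVariations_le_one hP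
    (signVariations_eulerQuintic hm1 hm2 hm3).le hy ⟨hx, hroot⟩⟩
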